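/- For partitions γ and μ with |μ| < |γ|, the evaluation of the polynomial p̄_γ (defined below) at Ξ_μ is 0. Moreover, if |μ| = |γ| then p̄_γ[Ξ_μ] = z_γ if γ = μ and 0 otherwise. -/

import Mathlib

/-!
The `d`-th powers of the `r`-th roots of unity sum to `r` if `r ∣ d` and to `0` otherwise, so
`p_d[Ξ_μ] = ∑_{d' ∣ d} d' m_{d'}(μ)`. Möbius inversion turns this into
`((1/i) ∑_{d ∣ i} μ(i/d) p_d)[Ξ_μ] = m_i(μ)`, whence `p̄_γ[Ξ_μ] = ∏_i i^{m_i(γ)} (m_i(μ))_{m_i(γ)}`.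
A falling factorial `(m)_r` vanishes for `m < r`, so the product is `0` unless `γ ⊆ μ`; for parts
of positive size and `|μ| ≤ |γ|` that forces `γ = μ`, where the product is `z_γ`.
-/

open scoped BigOperators

/-- Same eigenvalue collection, as a multiset. -/
noncomputable def xiM (μ : Multiset ℕ) : Multiset ℂ :=
  μ.bind fun r => (Multiset.range r).map fun k =>
    Complex.exp (2 * Real.pi * Complex.I * k / r)

/-- Evaluation of the power sum `p_n` on a multiset of values. -/
noncomputable def pEvalM (n : ℕ) (S : Multiset ℂ) : ℂ := (S.map (· ^ n)).sum

/-- The ring of symmetric functions, modeled as polynomials in the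
(algebraically independent) power sums `p_1, p_2, …`:  variable `k : ℕ+` stands for `p_k`. -/
abbrev SymF := MvPolynomial ℕ+ ℂ

/-- Evaluation of a symmetric function at the eigenvalues `Ξ_μ` of a permutation
matrix of cycle type `μ` (each `p_k` goes to `p_k[Ξ_μ]`). -/
noncomputable def evalXi (μ : Multiset ℕ) (f : SymF) : ℂ :=
  MvPolynomial.eval (fun k : ℕ+ => pEvalM (k : ℕ) (xiM μ)) f

/-- `z_γ = ∏ i^{m_i(γ)} m_i(γ)!`. -/
noncomputable def zPart (γ : Multiset ℕ) : ℂ :=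
  ∏ i ∈ γ.toFinset, ((i : ℂ) ^ γ.count i * Nat.factorial (γ.count i))

/-- The Möbius-inverted power sum `(1/i) ∑_{d ∣ i} μ(i/d) p_d`. -/
noncomputable def aFun (i : ℕ) : SymF :=
  ((i : ℂ)⁻¹) • ∑ d ∈ i.divisors.attach,
    (((ArithmeticFunction.moebius (i / d.1) : ℤ) : ℂ)) •
      MvPolynomial.X (⟨d.1, Nat.pos_of_mem_divisors d.2⟩ : ℕ+)

/-- `p̄_{i^r} = i^r ((1/i) ∑_{d|i} μ(i/d) p_d)_r` with the falling factorial. -/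
noncomputable def pbar (i r : ℕ) : SymF :=
  ((i : ℂ) ^ r) • ∏ j ∈ Finset.range r, (aFun i - MvPolynomial.C (j : ℂ))

/-- `p̄_γ = ∏_i p̄_{i^{m_i(γ)}}`. -/
noncomputable def pbarM (γ : Multiset ℕ) : SymF :=
  ∏ i ∈ γ.toFinset, pbar i (γ.count i)

theorem IsPrimitiveRoot.sum_range_pow_pow {R : Type*} [CommRing R] [IsDomain R] {ζ : R} {r : ℕ}
    (hζ : IsPrimitiveRoot ζ r) (d : ℕ) :
    ∑ k ∈ Finset.range r, (ζ ^ k) ^ d = if r ∣ d then (r : R) else 0 := by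
  simp_rw [← pow_mul, mul_comm _ d, pow_mul]
  split_ifs with hrd
  · simp [(hζ.pow_eq_one_iff_dvd d).mpr hrd]
  · have hne : ζ ^ d - 1 ≠ 0 := sub_ne_zero.mpr (mt (hζ.pow_eq_one_iff_dvd d).mp hrd)
    have hroot : (ζ ^ d) ^ r = 1 := by rw [← pow_mul, mul_comm, pow_mul, hζ.pow_eq_one, one_pow]
    simpa [hroot, hne] using geom_sum_mul (ζ ^ d) r

theorem Complex.sum_range_exp_pow (r d : ℕ) :
    ∑ k ∈ Finset.range r, Complex.exp (2 * Real.pi * Complex.I * k / r) ^ d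
      = if r ∣ d then (r : ℂ) else 0 := by
  rcases eq_or_ne r 0 with rfl | hr
  · simp
  have hexp : ∀ k : ℕ, Complex.exp (2 * Real.pi * Complex.I * k / r)
      = Complex.exp (2 * Real.pi * Complex.I / r) ^ k := by
    intro k
    rw [← Complex.exp_nat_mul]
    ring_nf
  simp_rw [hexp]
  exact (Complex.isPrimitiveRoot_exp r hr).sum_range_pow_pow d

theorem pEvalM_xiM_eq_sum_filter (μ : Multiset ℕ) (d : ℕ) :
    pEvalM d (xiM μ) = ((μ.filter (· ∣ d)).sum : ℂ) := by
  have hlift : ∀ r : ℕ, (Multiset.range r : Multiset ℂ) = (Multiset.range r).map (↑) :=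
    fun r => Multiset.bind_singleton _ _
  have hcycle : ∀ r : ℕ, ((((Multiset.range r).map (↑)).map fun k : ℂ =>
      Complex.exp (2 * Real.pi * Complex.I * k / r)).map (· ^ d)).sum
      = if r ∣ d then (r : ℂ) else 0 := by
    intro r
    rw [Multiset.map_map, Multiset.map_map]
    exact Complex.sum_range_exp_pow r d
  simp only [pEvalM, xiM, Multiset.map_bind, Multiset.sum_bind, hlift, hcycle]
  induction μ using Multiset.induction_on with
  | empty => simp
  | cons a μ ih => by_cases h : a ∣ d <;> simp [h, ih]

theorem Multiset.sum_filter_dvd {μ : Multiset ℕ} {d : ℕ} (hd : d ≠ 0) :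
    (μ.filter (· ∣ d)).sum = ∑ d' ∈ d.divisors, μ.count d' * d' := by
  rw [Finset.sum_multiset_count_of_subset _ d.divisors]
  · refine Finset.sum_congr rfl fun d' hd' => ?_
    rw [Multiset.count_filter_of_pos (p := (· ∣ d)) (Nat.dvd_of_mem_divisors hd'), smul_eq_mul]
  · intro d' hd'
    simp only [Multiset.mem_toFinset, Multiset.mem_filter] at hd'
    exact Nat.mem_divisors.mpr ⟨hd'.2, hd⟩

theorem pEvalM_xiM (μ : Multiset ℕ) {d : ℕ} (hd : d ≠ 0) :
    pEvalM d (xiM μ) = ∑ d' ∈ d.divisors, (μ.count d' * d' : ℂ) := by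
  rw [pEvalM_xiM_eq_sum_filter, Multiset.sum_filter_dvd hd]
  push_cast
  rfl

theorem evalXi_aFun (μ : Multiset ℕ) {i : ℕ} (hi : i ≠ 0) :
    evalXi μ (aFun i) = μ.count i := by
  have hinv : ∑ d ∈ i.divisors, (ArithmeticFunction.moebius (i / d) : ℂ) * pEvalM d (xiM μ)
      = μ.count i * i := by
    have := (ArithmeticFunction.sum_eq_iff_sum_mul_moebius_eq
      (f := fun n => (μ.count n * n : ℂ)) (g := fun n => pEvalM n (xiM μ))).mp
      (fun n hn => (pEvalM_xiM μ hn.ne').symm) i (Nat.pos_of_ne_zero hi)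
    rwa [Nat.sum_divisorsAntidiagonal'
      (fun a b => (ArithmeticFunction.moebius a : ℂ) * pEvalM b (xiM μ))] at this
  have hsum : evalXi μ (aFun i) = (i : ℂ)⁻¹ * ∑ d ∈ i.divisors.attach,
      (ArithmeticFunction.moebius (i / d) : ℂ) * pEvalM d (xiM μ) := by
    -- `aFun` elaborates at `SymF`; restating it at `MvPolynomial ℕ+ ℂ` lets `smul_eval` fire.
    rw [evalXi, show aFun i = (i : ℂ)⁻¹ • ∑ d ∈ i.divisors.attach,
      (ArithmeticFunction.moebius (i / d) : ℂ) • MvPolynomial.X (R := ℂ) (σ := ℕ+)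
        ⟨d, Nat.pos_of_mem_divisors d.2⟩ from rfl]
    simp only [MvPolynomial.smul_eval, map_sum]
    exact congrArg _ (Finset.sum_congr rfl fun d _ => congrArg _ (MvPolynomial.eval_X _))
  rw [hsum, Finset.sum_attach i.divisors
    fun d => (ArithmeticFunction.moebius (i / d) : ℂ) * pEvalM d (xiM μ), hinv]
  field_simp

theorem evalXi_pbar (μ : Multiset ℕ) (i r : ℕ) :
    evalXi μ (pbar i r) = (i : ℂ) ^ r * (μ.count i).descFactorial r := by
  rcases eq_or_ne i 0 with rfl | hi
  · cases r <;> simp [pbar, evalXi]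
  have ha := evalXi_aFun μ hi
  rw [← descPochhammer_eval_eq_descFactorial, descPochhammer_eval_eq_prod_range, ← ha]
  simp only [evalXi, pbar, MvPolynomial.smul_eval, map_prod, map_sub, MvPolynomial.eval_C]

theorem evalXi_pbarM (γ μ : Multiset ℕ) :
    evalXi μ (pbarM γ) =
      ∏ i ∈ γ.toFinset, (i : ℂ) ^ γ.count i * (μ.count i).descFactorial (γ.count i) := by
  simp only [evalXi, pbarM, map_prod]
  exact Finset.prod_congr rfl fun i _ => evalXi_pbar μ i (γ.count i)

theorem Multiset.prod_mul_descFactorial_count_eq_zero {α R : Type*} [DecidableEq α]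
    [CommSemiring R] {γ μ : Multiset α} (h : ¬ γ ≤ μ) (f : α → R) :
    ∏ i ∈ γ.toFinset, f i * ((μ.count i).descFactorial (γ.count i) : R) = 0 := by
  obtain ⟨i, hi⟩ := not_forall.mp (mt Multiset.le_iff_count.mpr h)
  have hiγ : i ∈ γ.toFinset := Multiset.mem_toFinset.mpr (Multiset.count_pos.mp (by omega))
  exact Finset.prod_eq_zero hiγ (by simp [Nat.descFactorial_of_lt (not_le.mp hi)])

theorem Multiset.eq_of_le_of_sum_le {γ μ : Multiset ℕ} (hle : γ ≤ μ) (hsum : μ.sum ≤ γ.sum)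
    (hμ : ∀ i ∈ μ, 0 < i) : γ = μ := by
  obtain ⟨δ, rfl⟩ := Multiset.le_iff_exists_add.mp hle
  rw [Multiset.sum_add] at hsum
  have hδ : δ.sum = 0 := by omega
  suffices δ = 0 by simp [this]
  refine Multiset.eq_zero_of_forall_notMem fun x hx => ?_
  have hx_pos := hμ x (Multiset.mem_add.mpr (Or.inr hx))
  have hx_zero := Multiset.sum_eq_zero_iff.mp hδ x hx
  omega

theorem pbar_eval_general (γ μ : Multiset ℕ) (hμ : ∀ i ∈ μ, 0 < i) :
    (μ.sum < γ.sum → evalXi μ (pbarM γ) = 0) ∧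
    (μ.sum = γ.sum → evalXi μ (pbarM γ) = if γ = μ then zPart γ else 0) := by
  rw [evalXi_pbarM]
  by_cases hle : γ ≤ μ
  · have heq_of_sum_le : μ.sum ≤ γ.sum → γ = μ := (Multiset.eq_of_le_of_sum_le hle · hμ)
    refine ⟨fun hlt => ?_, fun hsum => ?_⟩
    · cases heq_of_sum_le hlt.le
      exact (lt_irrefl _ hlt).elim
    · cases heq_of_sum_le hsum.le
      simp [zPart, Nat.descFactorial_self]
  · have hzero :=
      Multiset.prod_mul_descFactorial_count_eq_zero hle fun i : ℕ => (i : ℂ) ^ γ.count i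
    exact ⟨fun _ => hzero, fun _ => by rw [if_neg fun h => hle h.le, hzero]⟩

/-- For partitions `γ, μ`: if `|μ| < |γ|` then `p̄_γ[Ξ_μ] = 0`, and if `|μ| = |γ|` then
`p̄_γ[Ξ_μ] = z_γ δ_{γ=μ}`. -/
theorem pbar_eval (γ μ : Multiset ℕ) (hγ : ∀ i ∈ γ, 0 < i) (hμ : ∀ i ∈ μ, 0 < i) :
    (μ.sum < γ.sum → evalXi μ (pbarM γ) = 0) ∧
    (μ.sum = γ.sum → evalXi μ (pbarM γ) = if γ = μ then zPart γ else 0) :=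
  pbar_eval_general γ μ hμ
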